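/- Let Ω ⊆ D∖{0} be a union of orbits gR^× in a finite right R-module D over a finite Frobenius ring R, and suppose there exist v₁, v₂ ∈ ℝ such that λ(Ω) := Σ_{g∈Ω} λ(g) ∈ {v₁, v₂} for every nontrivial character λ of (D,+). If χ is a generating character of R and x ∈ R^k with D the column space of G = (g₁|...|gₙ) and Ω = g₁R^× ∪ ... ∪ gₙR^×, then Σ_{g∈Ω} w_hom(x·g) = |Ω| − Σ_{g∈Ω} χ(x·g) takes only values in {0, |Ω|−v₁, |Ω|−v₂}; hence the left code C = {xG : x ∈ R^k} has at most two nonzero homogeneous weights. -/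

import Mathlib

open scoped Classical

/-- The normalized homogeneous weight defined from an additive character. -/
noncomputable def whom {R : Type} [Ring R] [Fintype R] (χ : AddChar R ℂ) (x : R) : ℂ :=
  1 - (Fintype.card Rˣ : ℂ)⁻¹ * ∑ u : Rˣ, χ ((u : R) * x)

/-- The homogeneous weight of a word, extended additively. -/
noncomputable def whomV {R : Type} [Ring R] [Fintype R] (χ : AddChar R ℂ)
    {n : ℕ} (c : Fin n → R) : ℂ :=
  ∑ j, whom χ (c j)

/-- A generating character: a character of `(R,+)` whose kernel contains no
nonzero left ideal. -/
def IsGenChar {R : Type} [Ring R] [Fintype R] (χ : AddChar R ℂ) : Prop :=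
  ∀ I : Ideal R, I ≠ ⊥ → ∃ x ∈ I, χ x ≠ 1

/-!
A generating character `χ` has a Nakayama automorphism `σ`, `χ (σ a * r) = χ (r * a)`, which
makes the unit average in `w_hom` two-sided. As `Ω` is stable under right multiplication by
units, `Σ_{g ∈ Ω} w_hom (x·g)` collapses to `|Ω| - Σ_{g ∈ Ω} χ (x·g)`, and `g ↦ χ (x·g)` is a
character of the column space: either trivial there (weight `0`) or, by hypothesis, with sum
`v₁` or `v₂` over `Ω`. For the codeword `xG`, `hmod` says that each orbit in `Ω` is the orbit of
`r` times its size many columns; this needs that over a finite ring two vectors generating the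
same cyclic right submodule are unit multiples of each other. That fact comes from a Fitting
decomposition of `a b` together with cancellation of finite modules, which holds because the
numbers of homomorphisms into all finite modules determine a finite module.
-/

open Finset

def AddChar.mulShiftRight {R : Type*} [Ring R] (χ : AddChar R ℂ) (a : R) : AddChar R ℂ :=
  χ.compAddMonoidHom (AddMonoidHom.mulRight a)

@[simp]
lemma AddChar.mulShiftRight_apply {R : Type*} [Ring R] (χ : AddChar R ℂ) (a r : R) :
    χ.mulShiftRight a r = χ (r * a) := rfl

lemma AddChar.apply_sub_eq_one_of_apply_eq {A : Type*} [AddCommGroup A] (ψ : AddChar A ℂ) {x y : A}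
    (h : ψ x = ψ y) : ψ (x - y) = 1 := by
  rw [ψ.map_sub_eq_div, h, div_self (ψ.val_isUnit y).ne_zero]

namespace IsGenChar

variable {R : Type} [Ring R] [Fintype R] {χ : AddChar R ℂ}

lemma eq_zero_of_forall_apply_mul_eq_one (hχ : IsGenChar χ) {a : R}
    (h : ∀ r, χ (r * a) = 1) : a = 0 := by
  by_contra ha
  obtain ⟨x, hx, hx1⟩ := hχ (Ideal.span {a}) (by simpa using ha)
  obtain ⟨r, rfl⟩ := Ideal.mem_span_singleton'.mp hx
  exact hx1 (h r)

lemma mulShiftRight_bijective (hχ : IsGenChar χ) : Function.Bijective χ.mulShiftRight := by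
  refine (Fintype.bijective_iff_injective_and_card _).mpr ⟨fun a a' h => ?_, AddChar.card_eq.symm⟩
  refine sub_eq_zero.mp (hχ.eq_zero_of_forall_apply_mul_eq_one fun r => ?_)
  rw [mul_sub]
  exact χ.apply_sub_eq_one_of_apply_eq (DFunLike.congr_fun h r)

/-- Every character of `(R, +)` has the form `r ↦ χ (r * a)`, so none separates `b` from `0`. -/
lemma eq_zero_of_forall_apply_mul_left_eq_one (hχ : IsGenChar χ) {b : R}
    (h : ∀ r, χ (b * r) = 1) : b = 0 := by
  by_contra hb
  obtain ⟨ψ, hψ⟩ := AddChar.exists_apply_ne_zero.mpr hb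
  obtain ⟨a, rfl⟩ := hχ.mulShiftRight_bijective.2 ψ
  exact hψ (h a)

lemma mulShift_bijective (hχ : IsGenChar χ) : Function.Bijective χ.mulShift := by
  refine (Fintype.bijective_iff_injective_and_card _).mpr ⟨fun b b' h => ?_, AddChar.card_eq.symm⟩
  refine sub_eq_zero.mp (hχ.eq_zero_of_forall_apply_mul_left_eq_one fun r => ?_)
  rw [sub_mul]
  exact χ.apply_sub_eq_one_of_apply_eq (DFunLike.congr_fun h r)

/-- The Nakayama automorphism of `χ`, characterised by `χ (σ a * r) = χ (r * a)`. -/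
noncomputable def nakayama (hχ : IsGenChar χ) : R →* R :=
  let σ a := (Equiv.ofBijective _ hχ.mulShift_bijective).symm (χ.mulShiftRight a)
  have spec (a r : R) : χ (σ a * r) = χ (r * a) :=
    DFunLike.congr_fun (Equiv.ofBijective_apply_symm_apply _ hχ.mulShift_bijective _) r
  { toFun := σ
    map_one' := hχ.mulShift_bijective.1 <| by ext r; simp [spec]
    map_mul' a b := hχ.mulShift_bijective.1 <| by
      ext r
      simp only [AddChar.mulShift_apply, spec, mul_assoc] }

lemma apply_nakayama_mul (hχ : IsGenChar χ) (a r : R) : χ (hχ.nakayama a * r) = χ (r * a) :=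
  DFunLike.congr_fun (Equiv.ofBijective_apply_symm_apply _ hχ.mulShift_bijective _) r

lemma nakayama_injective (hχ : IsGenChar χ) : Function.Injective hχ.nakayama := fun a a' h =>
  hχ.mulShiftRight_bijective.1 <| by
    ext r
    rw [AddChar.mulShiftRight_apply, AddChar.mulShiftRight_apply, ← hχ.apply_nakayama_mul, h,
      hχ.apply_nakayama_mul]

/-- `χ (u t) = χ (σ t · u) = χ (σ t · σ u)`, and `σ` permutes the units. -/
lemma sum_units_mul_eq_sum_mul_units (hχ : IsGenChar χ) (t : R) :
    ∑ u : Rˣ, χ (u * t) = ∑ u : Rˣ, χ (t * u) := by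
  have hσ : Function.Bijective (Units.map hχ.nakayama) :=
    Finite.injective_iff_bijective.mp (Units.map_injective hχ.nakayama_injective)
  calc ∑ u : Rˣ, χ (u * t) = ∑ u : Rˣ, χ (hχ.nakayama t * u) := by
        simp only [hχ.apply_nakayama_mul]
    _ = ∑ u : Rˣ, χ (t * u) := by
        refine (Fintype.sum_bijective _ hσ _ _ fun u => ?_).symm
        rw [Units.coe_map, ← map_mul, ← mul_one (hχ.nakayama (t * u)),
          hχ.apply_nakayama_mul, one_mul]

end IsGenChar

instance LinearMap.finite_of_finite {S X T : Type*} [Semiring S] [AddCommMonoid X] [Module S X]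
    [AddCommMonoid T] [Module S T] [Finite X] [Finite T] : Finite (X →ₗ[S] T) :=
  .of_injective _ DFunLike.coe_injective

lemma Submodule.natCard_lt_of_ne_top {S T : Type*} [Semiring S] [AddCommMonoid T] [Module S T]
    [Finite T] {W : Submodule S T} (hW : W ≠ ⊤) : Nat.card W < Nat.card T := by
  obtain ⟨x, hx⟩ := not_forall.mp (mt Submodule.eq_top_iff'.mpr hW)
  exact Finite.card_subtype_lt hx

section Cancellation

universe u

variable {S : Type*} [Ring S] {X Y T : Type*} [AddCommGroup X] [Module S X]
  [AddCommGroup Y] [Module S Y] [AddCommGroup T] [Module S T]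

def LinearMap.rangeEqEquivSurjective (W : Submodule S T) :
    {f : X →ₗ[S] T // LinearMap.range f = W} ≃ {g : X →ₗ[S] W // Function.Surjective g} where
  toFun f := ⟨f.1.codRestrict W fun x => f.2.le (LinearMap.mem_range_self f.1 x), fun y => by
    obtain ⟨x, hx⟩ := f.2.ge y.2
    exact ⟨x, Subtype.ext hx⟩⟩
  invFun g := ⟨W.subtype ∘ₗ g.1, by
    rw [LinearMap.range_comp, LinearMap.range_eq_top.2 g.2, Submodule.map_top,
      Submodule.range_subtype]⟩
  left_inv f := rfl
  right_inv g := rfl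

lemma natCard_linearMap_eq_sum_natCard_range [Finite X] [Finite T] [Fintype (Submodule S T)] :
    Nat.card (X →ₗ[S] T) = ∑ W, Nat.card {f : X →ₗ[S] T // LinearMap.range f = W} := by
  rw [← Nat.card_congr (Equiv.sigmaFiberEquiv fun f : X →ₗ[S] T => LinearMap.range f),
    Nat.card_sigma]

/-- `Hom(X, T)` is the disjoint union over `W ≤ T` of the surjections `X → W`; induct on `|T|`. -/
lemma natCard_surjective_eq_of_natCard_linearMap_eq [Finite X] [Finite Y]
    (h : ∀ (T : Type u) [AddCommGroup T] [Module S T] [Finite T],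
      Nat.card (X →ₗ[S] T) = Nat.card (Y →ₗ[S] T))
    (T : Type u) [AddCommGroup T] [Module S T] [Finite T] :
    Nat.card {f : X →ₗ[S] T // Function.Surjective f} =
      Nat.card {f : Y →ₗ[S] T // Function.Surjective f} := by
  induction hT : Nat.card T using Nat.strong_induction_on generalizing T with
  | _ N ih =>
  have := Fintype.ofFinite (Submodule S T)
  have hproper : ∀ W ∈ Finset.univ.erase ⊤,
      Nat.card {f : X →ₗ[S] T // LinearMap.range f = W} =
        Nat.card {f : Y →ₗ[S] T // LinearMap.range f = W} := fun W hW => by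
    rw [Nat.card_congr (LinearMap.rangeEqEquivSurjective W),
      Nat.card_congr (LinearMap.rangeEqEquivSurjective W)]
    exact ih _ (hT ▸ Submodule.natCard_lt_of_ne_top (Finset.ne_of_mem_erase hW)) W rfl
  have htop := h T
  rw [natCard_linearMap_eq_sum_natCard_range, natCard_linearMap_eq_sum_natCard_range,
    ← Finset.add_sum_erase _ _ (Finset.mem_univ ⊤), ← Finset.add_sum_erase _ _ (Finset.mem_univ ⊤),
    Finset.sum_congr rfl hproper] at htop
  simpa only [LinearMap.range_eq_top] using Nat.add_right_cancel htop

/-- `|Hom(C × A, T)| = |Hom(C, T)| |Hom(A, T)|`, so `C` and `D` have the same numbers of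
surjections onto `D`; a surjection `C → D` is bijective since `|C| = |D|`. -/
theorem nonempty_linearEquiv_of_prod_linearEquiv_prod {C D A : Type u} [AddCommGroup C]
    [Module S C] [AddCommGroup D] [Module S D] [AddCommGroup A] [Module S A]
    [Finite C] [Finite D] [Finite A] (e : (C × A) ≃ₗ[S] (D × A)) : Nonempty (C ≃ₗ[S] D) := by
  have hhom (T : Type u) [AddCommGroup T] [Module S T] [Finite T] :
      Nat.card (C →ₗ[S] T) = Nat.card (D →ₗ[S] T) := by
    have hprod : Nat.card (C × A →ₗ[S] T) = Nat.card (D × A →ₗ[S] T) := Nat.card_congr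
      { toFun f := f ∘ₗ e.symm.toLinearMap
        invFun g := g ∘ₗ e.toLinearMap
        left_inv f := by ext <;> simp
        right_inv g := by ext <;> simp }
    rw [← Nat.card_congr (LinearMap.coprodEquiv ℕ).toEquiv,
      ← Nat.card_congr (LinearMap.coprodEquiv ℕ).toEquiv, Nat.card_prod, Nat.card_prod] at hprod
    exact Nat.eq_of_mul_eq_mul_right Nat.card_pos hprod
  have hsurj : 0 < Nat.card {f : C →ₗ[S] D // Function.Surjective f} := by
    rw [natCard_surjective_eq_of_natCard_linearMap_eq hhom]
    exact Nat.card_pos_iff.2 ⟨⟨⟨LinearMap.id, Function.surjective_id⟩⟩, inferInstance⟩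
  obtain ⟨⟨f, hf⟩⟩ := (Nat.card_pos_iff.mp hsurj).1
  have hcard : Nat.card C = Nat.card D := by
    have := Nat.card_congr e.toEquiv
    rw [Nat.card_prod, Nat.card_prod] at this
    exact Nat.eq_of_mul_eq_mul_right Nat.card_pos this
  have := Fintype.ofFinite C
  have := Fintype.ofFinite D
  refine ⟨LinearEquiv.ofBijective f ((Fintype.bijective_iff_surjective_and_card f).mpr ⟨hf, ?_⟩)⟩
  simpa only [Nat.card_eq_fintype_card] using hcard

end Cancellation

lemma exists_isIdempotentElem_pow {M : Type*} [Monoid M] [Finite M] (x : M) :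
    ∃ n ≠ 0, IsIdempotentElem (x ^ n) := by
  obtain ⟨m, m', hne, h⟩ := Finite.exists_ne_map_eq_of_infinite (x ^ · : ℕ → M)
  wlog hlt : m < m' generalizing m m'
  · exact this m' m hne.symm h.symm (by omega)
  have hper (k j : ℕ) : x ^ (m + j + k * (m' - m)) = x ^ (m + j) := by
    induction k generalizing j with
    | zero => simp
    | succ k ih =>
      rw [show m + j + (k + 1) * (m' - m) = m' + (j + k * (m' - m)) by
          rw [add_mul]; omega,
        pow_add, ← show x ^ m = x ^ m' from h, ← pow_add, ← add_assoc, ih]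
  have hm : m ≤ (m + 1) * (m' - m) := le_trans m.le_succ (Nat.le_mul_of_pos_right _ (by omega))
  refine ⟨(m + 1) * (m' - m), Nat.mul_ne_zero (by omega) (by omega), ?_⟩
  have := hper (m + 1) ((m + 1) * (m' - m) - m)
  rwa [Nat.add_sub_cancel' hm, pow_add] at this

section RightCorner

variable {R : Type*} [Ring R]

/-- The right ideal `{x | e * x = x}`, which is `e R` when `e` is idempotent. -/
def rightCorner (e : R) : Submodule Rᵐᵒᵖ R where
  carrier := {x | e * x = x}
  add_mem' {x y} hx hy := by simp_all [mul_add]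
  zero_mem' := mul_zero e
  smul_mem' c x hx := by
    simp only [Set.mem_ofPred_eq, MulOpposite.smul_eq_mul_unop] at hx ⊢
    rw [← mul_assoc, hx]

lemma mem_rightCorner {e x : R} : x ∈ rightCorner e ↔ e * x = x := Iff.rfl

lemma mul_eq_zero_of_mem_rightCorner_one_sub {e x : R} (he : IsIdempotentElem e)
    (hx : x ∈ rightCorner (1 - e)) : e * x = 0 := by
  rw [← mem_rightCorner.mp hx, ← mul_assoc, he.mul_one_sub_self, zero_mul]

/-- Peirce decomposition `R = e R ⊕ (1 - e) R`. -/
def IsIdempotentElem.rightCornerEquiv {e : R} (he : IsIdempotentElem e) :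
    R ≃ₗ[Rᵐᵒᵖ] rightCorner e × rightCorner (1 - e) where
  toFun x := (⟨e * x, he.mul_self_mul x⟩, ⟨(1 - e) * x, he.one_sub.mul_self_mul x⟩)
  map_add' x y := by ext <;> simp [mul_add]
  map_smul' c x := by ext <;> simp [MulOpposite.smul_eq_mul_unop, mul_assoc]
  invFun p := p.1 + p.2
  left_inv x := by simp [sub_mul]
  right_inv := by
    rintro ⟨⟨y, hy⟩, ⟨z, hz⟩⟩
    have hez := mul_eq_zero_of_mem_rightCorner_one_sub he hz
    have hey : (1 - e) * y = 0 := by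
      rw [← mem_rightCorner.mp hy, ← mul_assoc, he.one_sub_mul_self, zero_mul]
    ext
    · simp [mul_add, mem_rightCorner.mp hy, hez]
    · simp only [mul_add, hey, mem_rightCorner.mp hz, zero_add]

def rightCornerEquivOfMul {e f p q : R} (hpq : p * q = e) (hqp : q * p = f) (hep : e * p = p)
    (hfq : f * q = q) : rightCorner f ≃ₗ[Rᵐᵒᵖ] rightCorner e where
  toFun x := ⟨p * x, by rw [mem_rightCorner, ← mul_assoc, hep]⟩
  map_add' x y := by ext; simp [mul_add]
  map_smul' c x := by ext; simp [MulOpposite.smul_eq_mul_unop, mul_assoc]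
  invFun y := ⟨q * y, by rw [mem_rightCorner, ← mul_assoc, hfq]⟩
  left_inv x := by ext; simp only [← mul_assoc, hqp, mem_rightCorner.mp x.2]
  right_inv y := by ext; simp only [← mul_assoc, hpq, mem_rightCorner.mp y.2]

end RightCorner

/-- `φ` is left multiplication by `φ 1`, and `φ.symm` by `φ.symm 1`. -/
lemma LinearEquiv.isUnit_apply_one {R : Type*} [Ring R] (φ : R ≃ₗ[Rᵐᵒᵖ] R) : IsUnit (φ 1) := by
  have hφ (g : R ≃ₗ[Rᵐᵒᵖ] R) (r : R) : g r = g 1 * r := by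
    simpa [MulOpposite.smul_eq_mul_unop] using g.map_smul (MulOpposite.op r) 1
  refine ⟨⟨φ 1, φ.symm 1, ?_, ?_⟩, rfl⟩
  · rw [← hφ, LinearEquiv.apply_symm_apply]
  · rw [← hφ, LinearEquiv.symm_apply_apply]

section FiniteRing

variable {R : Type*} [Ring R] [Finite R]

/-- If `p, q` identify `f R` with `e R`, cancellation identifies `(1 - f) R` with `(1 - e) R`;
the two isomorphisms glue to an automorphism of `R_R`, i.e. a unit `u`, with `e * u = p`. -/
theorem exists_unit_mul_eq_of_mul_eq {e f p q : R} (he : IsIdempotentElem e)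
    (hf : IsIdempotentElem f) (hpq : p * q = e) (hqp : q * p = f) (hep : e * p = p)
    (hfq : f * q = q) : ∃ u : Rˣ, e * u = p := by
  let θ := rightCornerEquivOfMul hpq hqp hep hfq
  obtain ⟨ψ⟩ : Nonempty (rightCorner (1 - f) ≃ₗ[Rᵐᵒᵖ] rightCorner (1 - e)) :=
    nonempty_linearEquiv_of_prod_linearEquiv_prod (A := rightCorner f) <|
      (LinearEquiv.prodComm _ _ _).trans <| hf.rightCornerEquiv.symm.trans <|
        he.rightCornerEquiv.trans <| (θ.symm.prodCongr (LinearEquiv.refl _ _)).trans <|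
          LinearEquiv.prodComm _ _ _
  let φ := hf.rightCornerEquiv.trans ((θ.prodCongr ψ).trans he.rightCornerEquiv.symm)
  refine ⟨φ.isUnit_apply_one.unit, ?_⟩
  have hpf : p * f = p := by rw [← hqp, ← mul_assoc, hpq, hep]
  have hψ := mul_eq_zero_of_mem_rightCorner_one_sub he (ψ ⟨1 - f, hf.one_sub⟩).2
  simp [φ, θ, IsIdempotentElem.rightCornerEquiv, rightCornerEquivOfMul, mul_add, hψ,
    hep, hpf]

/-- Fitting decomposition: with `s = a b`, `t = b a` and `e = s ^ N`, `f = t ^ N` idempotent,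
`p = e a` and `q = b s ^ (N - 1) e` identify `f R` with `e R`. The resulting unit has
`e u = e a`, and `x e = x` whenever `x s = x`. -/
theorem exists_unit_forall_mul_eq_mul (a b : R) :
    ∃ u : Rˣ, ∀ x, x * (a * b) = x → x * u = x * a := by
  obtain ⟨N₁, hN₁, h₁⟩ := exists_isIdempotentElem_pow (a * b)
  obtain ⟨N₂, hN₂, h₂⟩ := exists_isIdempotentElem_pow (b * a)
  obtain ⟨M, hM⟩ : ∃ M, N₁ * N₂ = M + 1 := Nat.exists_eq_succ_of_ne_zero (mul_ne_zero hN₁ hN₂)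
  obtain ⟨s, hs⟩ : ∃ s, a * b = s := ⟨_, rfl⟩
  obtain ⟨t, ht⟩ : ∃ t, b * a = t := ⟨_, rfl⟩
  have he : IsIdempotentElem (s ^ (M + 1)) := by rw [← hs, ← hM, pow_mul]; exact h₁.pow N₂
  have hf : IsIdempotentElem (t ^ (M + 1)) := by
    rw [← ht, ← hM, mul_comm, pow_mul]; exact h₂.pow N₁
  have hbs (n : ℕ) : b * s ^ n = t ^ n * b :=
    (show SemiconjBy b s t by rw [SemiconjBy, ← hs, ← ht, mul_assoc]).pow_right n
  have hpq : s ^ (M + 1) * a * (b * s ^ M * s ^ (M + 1)) = s ^ (M + 1) :=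
    calc s ^ (M + 1) * a * (b * s ^ M * s ^ (M + 1))
        = s ^ (M + 1) * (a * b * s ^ M) * s ^ (M + 1) := by simp only [mul_assoc]
      _ = s ^ (M + 1) * s ^ (M + 1) * s ^ (M + 1) := by rw [hs, ← pow_succ']
      _ = s ^ (M + 1) := by rw [he.eq, he.eq]
  have hqp : b * s ^ M * s ^ (M + 1) * (s ^ (M + 1) * a) = t ^ (M + 1) :=
    calc b * s ^ M * s ^ (M + 1) * (s ^ (M + 1) * a)
        = b * s ^ M * (s ^ (M + 1) * s ^ (M + 1)) * a := by simp only [mul_assoc]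
      _ = t ^ (M + (M + 1)) * (b * a) := by rw [he.eq, mul_assoc b, ← pow_add, hbs, mul_assoc]
      _ = t ^ (M + 1) * t ^ (M + 1) := by rw [ht, ← pow_succ, ← pow_add]; ring_nf
      _ = t ^ (M + 1) := hf.eq
  have hfq : t ^ (M + 1) * (b * s ^ M * s ^ (M + 1)) = b * s ^ M * s ^ (M + 1) :=
    calc t ^ (M + 1) * (b * s ^ M * s ^ (M + 1))
        = b * (s ^ M * s ^ (M + 1)) * s ^ (M + 1) := by
          rw [← mul_assoc, ← mul_assoc, ← hbs, pow_mul_comm, mul_assoc b]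
      _ = b * s ^ M * s ^ (M + 1) := by rw [mul_assoc, mul_assoc, he.eq, ← mul_assoc]
  obtain ⟨u, hu⟩ := exists_unit_mul_eq_of_mul_eq he hf hpq hqp (by rw [← mul_assoc, he.eq]) hfq
  refine ⟨u, fun x hx => ?_⟩
  have hxe : x * s ^ (M + 1) = x := by
    simpa [SemiconjBy] using
      (show SemiconjBy x s 1 by rw [SemiconjBy, one_mul, ← hs, hx]).pow_right (M + 1)
  rw [← hxe, mul_assoc, hu, ← mul_assoc, hxe]

end FiniteRing

lemma sum_eq_mul_sum_biUnion {ι γ : Type*} [Fintype ι] [DecidableEq γ] (O : ι → Finset γ)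
    (F : γ → ℂ) (p : ι → γ) (r : ℂ) (hp : ∀ j, p j ∈ O j) (hF : ∀ j, ∀ g ∈ O j, F g = F (p j))
    (hO : ∀ j j', ∀ g ∈ O j, g ∈ O j' → O j = O j')
    (hcard : ∀ j, (#{j' | O j' = O j} : ℂ) = r * #(O j)) :
    ∑ j, F (p j) = r * ∑ g ∈ univ.biUnion O, F g := by
  have hne (j : ι) : (#(O j) : ℂ) ≠ 0 := Nat.cast_ne_zero.mpr (card_ne_zero_of_mem (hp j))
  calc ∑ j, F (p j) = ∑ j, ∑ g ∈ O j, (#(O j) : ℂ)⁻¹ * F g := by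
        refine sum_congr rfl fun j _ => ?_
        rw [sum_congr rfl fun g hg => by rw [hF j g hg], sum_const, nsmul_eq_mul, ← mul_assoc,
          mul_inv_cancel₀ (hne j), one_mul]
    _ = ∑ g ∈ univ.biUnion O, ∑ j with g ∈ O j, (#(O j) : ℂ)⁻¹ * F g :=
        sum_comm' fun j g => by simpa using fun hg => ⟨j, hg⟩
    _ = ∑ g ∈ univ.biUnion O, r * F g := by
        refine sum_congr rfl fun g hg => ?_
        obtain ⟨j₀, -, hj₀⟩ := mem_biUnion.mp hg
        have hclass : univ.filter (g ∈ O ·) = univ.filter (O · = O j₀) :=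
          filter_congr fun j _ => ⟨fun hj => hO j j₀ g hj hj₀, fun h => h ▸ hj₀⟩
        rw [hclass, sum_congr rfl fun j hj => by rw [(mem_filter.mp hj).2], sum_const,
          nsmul_eq_mul, hcard, mul_assoc, ← mul_assoc (#(O j₀) : ℂ), mul_inv_cancel₀ (hne j₀),
          one_mul]
    _ = r * ∑ g ∈ univ.biUnion O, F g := (mul_sum _ _ _).symm

section UnitOrbit

variable {R ι : Type*} [Ring R] [Fintype R] [DecidableEq (ι → R)]

/-- The orbit `g R^×`. -/
noncomputable def unitOrbit (g : ι → R) : Finset (ι → R) :=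
  univ.image fun u : Rˣ => fun i => g i * u

lemma mem_unitOrbit {g h : ι → R} : h ∈ unitOrbit g ↔ ∃ u : Rˣ, (fun i => g i * u) = h := by
  simp [unitOrbit]

lemma self_mem_unitOrbit (g : ι → R) : g ∈ unitOrbit g := mem_unitOrbit.2 ⟨1, by simp⟩

lemma unitOrbit_eq_of_mem {g h : ι → R} (hh : h ∈ unitOrbit g) : unitOrbit h = unitOrbit g := by
  obtain ⟨u, rfl⟩ := mem_unitOrbit.1 hh
  ext v
  simp only [mem_unitOrbit]
  constructor
  · rintro ⟨u', rfl⟩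
    exact ⟨u * u', by simp [mul_assoc]⟩
  · rintro ⟨u', rfl⟩
    exact ⟨u⁻¹ * u', by simp [mul_assoc]⟩

lemma unitOrbit_eq_iff {g h : ι → R} :
    unitOrbit g = unitOrbit h ↔
      {v | ∃ t, v = fun i => g i * t} = {v | ∃ t, v = fun i => h i * t} := by
  constructor
  · intro hgh
    obtain ⟨u, rfl⟩ := mem_unitOrbit.1 (hgh ▸ self_mem_unitOrbit g)
    ext v
    constructor
    · rintro ⟨t, rfl⟩
      exact ⟨u * t, by simp [mul_assoc]⟩
    · rintro ⟨t, rfl⟩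
      exact ⟨↑u⁻¹ * t, by simp [mul_assoc]⟩
  · intro hgh
    obtain ⟨a, ha⟩ : g ∈ {v | ∃ t, v = fun i => h i * t} := hgh ▸ ⟨1, by simp⟩
    obtain ⟨b, hb⟩ : h ∈ {v | ∃ t, v = fun i => g i * t} := hgh ▸ ⟨1, by simp⟩
    obtain ⟨u, hu⟩ := exists_unit_forall_mul_eq_mul a b
    refine unitOrbit_eq_of_mem (mem_unitOrbit.2 ⟨u, funext fun i => ?_⟩)
    have hai : g i = h i * a := congrFun ha i
    have hbi : h i = g i * b := congrFun hb i
    rw [hu (h i) (by rw [← mul_assoc, ← hai, ← hbi]), hai]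

variable {κ : Type*} [Fintype κ] (G : Matrix ι κ R) {g : ι → R}

lemma mul_unit_mem_biUnion_unitOrbit (hg : g ∈ univ.biUnion fun j => unitOrbit fun i => G i j)
    (u : Rˣ) : (fun i => g i * u) ∈ univ.biUnion fun j => unitOrbit fun i => G i j := by
  obtain ⟨j, -, hj⟩ := mem_biUnion.mp hg
  exact mem_biUnion.mpr ⟨j, mem_univ j, unitOrbit_eq_of_mem hj ▸ mem_unitOrbit.2 ⟨u, rfl⟩⟩

lemma exists_mulVec_eq_of_mem_biUnion_unitOrbit
    (hg : g ∈ univ.biUnion fun j => unitOrbit fun i => G i j) : ∃ y, G.mulVec y = g := by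
  obtain ⟨j, -, hj⟩ := mem_biUnion.mp hg
  obtain ⟨u, rfl⟩ := mem_unitOrbit.1 hj
  exact ⟨Pi.single j (u : R), by ext i; simp [Matrix.mulVec_single]⟩

end UnitOrbit

lemma sum_apply_mem_insert_card_of_twoValued {V W : Type*} [AddCommGroup V] (f : W → V)
    (Ω : Finset V) (hΩ : ∀ g ∈ Ω, ∃ y, f y = g) {a b : ℂ}
    (hval : ∀ ψ : AddChar V ℂ, (∃ y, ψ (f y) ≠ 1) → ∑ g ∈ Ω, ψ g ∈ ({a, b} : Set ℂ))
    (ψ : AddChar V ℂ) : ∑ g ∈ Ω, ψ g ∈ ({(#Ω : ℂ), a, b} : Set ℂ) := by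
  by_cases h : ∃ y, ψ (f y) ≠ 1
  · exact Set.mem_insert_of_mem _ (hval ψ h)
  · refine Set.mem_insert_iff.mpr (.inl ?_)
    rw [sum_congr rfl fun g hg => ?_, sum_const, nsmul_one]
    obtain ⟨y, rfl⟩ := hΩ g hg
    exact not_not.mp (not_exists.mp h y)

namespace IsGenChar

variable {R : Type} [Ring R] [Fintype R] {χ : AddChar R ℂ}

lemma whom_eq (hχ : IsGenChar χ) (t : R) :
    whom χ t = 1 - (Fintype.card Rˣ : ℂ)⁻¹ * ∑ u : Rˣ, χ (t * u) := by
  rw [whom, hχ.sum_units_mul_eq_sum_mul_units]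

lemma whom_mul_unit (hχ : IsGenChar χ) (t : R) (u : Rˣ) : whom χ (t * u) = whom χ t := by
  rw [hχ.whom_eq, hχ.whom_eq]
  congr 2
  exact Fintype.sum_equiv (Equiv.mulLeft u) _ _ fun u' => by simp [mul_assoc]

/-- Averaging over `Ω = Ω R^×` turns the unit average in `w_hom` into a plain character sum. -/
lemma sum_whom_eq_card_sub_sum (hχ : IsGenChar χ) {ι : Type*} [Fintype ι] (x : ι → R)
    (Ω : Finset (ι → R)) (hΩ : ∀ g ∈ Ω, ∀ u : Rˣ, (fun i => g i * u) ∈ Ω) :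
    ∑ g ∈ Ω, whom χ (∑ i, x i * g i) = #Ω - ∑ g ∈ Ω, χ (∑ i, x i * g i) := by
  have hinv (u : Rˣ) : ∑ g ∈ Ω, χ ((∑ i, x i * g i) * u) = ∑ g ∈ Ω, χ (∑ i, x i * g i) :=
    sum_nbij' (fun g i => g i * u) (fun g i => g i * ↑u⁻¹) (fun g hg => hΩ g hg u)
      (fun g hg => hΩ g hg u⁻¹) (fun g _ => by simp [mul_assoc]) (fun g _ => by simp [mul_assoc])
      (fun g _ => by simp [sum_mul, mul_assoc])
  have hcard : (Fintype.card Rˣ : ℂ) ≠ 0 := Nat.cast_ne_zero.mpr Fintype.card_ne_zero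
  simp only [hχ.whom_eq, sum_sub_distrib, ← mul_sum, sum_const, nsmul_one]
  rw [sum_comm, sum_congr rfl fun u _ => hinv u, sum_const, card_univ, nsmul_eq_mul,
    inv_mul_cancel_left₀ hcard]

/-- `w_hom (x·g)` is constant on unit orbits, and by `hmod` each orbit in the union is the orbit
of `r` times its size many columns. -/
lemma sum_whom_columns_eq (hχ : IsGenChar χ) {ι κ : Type*} [Fintype ι] [Fintype κ]
    [DecidableEq (ι → R)] (G : Matrix ι κ R) (r : ℝ)
    (hmod : ∀ j, (#{j' | {v : ι → R | ∃ t : R, v = fun i => G i j' * t} =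
          {v : ι → R | ∃ t : R, v = fun i => G i j * t}} : ℝ) =
        r * #(unitOrbit fun i => G i j)) (x : ι → R) :
    ∑ j, whom χ (∑ i, x i * G i j) =
      r * ∑ g ∈ univ.biUnion (fun j => unitOrbit fun i => G i j), whom χ (∑ i, x i * g i) := by
  refine sum_eq_mul_sum_biUnion (fun j => unitOrbit fun i => G i j)
    (fun g => whom χ (∑ i, x i * g i)) (fun j i => G i j) (r : ℂ)
    (fun j => self_mem_unitOrbit _) (fun j g hg => ?_)
    (fun j j' g hj hj' => (unitOrbit_eq_of_mem hj).symm.trans (unitOrbit_eq_of_mem hj'))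
    (fun j => ?_)
  · obtain ⟨u, rfl⟩ := mem_unitOrbit.1 hg
    simp only [← mul_assoc, ← sum_mul, hχ.whom_mul_unit]
  · rw [filter_congr fun j' _ => unitOrbit_eq_iff]
    exact_mod_cast hmod j

end IsGenChar

theorem twoValued_charSum_gives_twoWeight_general {R : Type} [Ring R] [Fintype R]
    (χ : AddChar R ℂ) (hχ : IsGenChar χ)
    (k n : ℕ) (G : Matrix (Fin k) (Fin n) R)
    (r : ℝ)
    (hmod : ∀ j, ((Finset.univ.filter (fun j' =>
          {v : Fin k → R | ∃ t : R, v = fun i => G i j' * t} =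
          {v : Fin k → R | ∃ t : R, v = fun i => G i j * t})).card : ℝ) =
        r * ((Finset.image (fun u : Rˣ => fun i => G i j * (u : R))
                (Finset.univ : Finset Rˣ)).card : ℝ))
    (Ω : Finset (Fin k → R))
    (hΩ : Ω = Finset.univ.filter
        (fun v : Fin k → R => ∃ j, ∃ u : Rˣ, v = fun i => G i j * (u : R)))
    (v₁ v₂ : ℝ)
    (hval : ∀ lam : AddChar (Fin k → R) ℂ,
      (∃ y : Fin n → R, lam (fun i => ∑ j, G i j * y j) ≠ 1) →
      (∑ g ∈ Ω, lam g) ∈ ({(v₁ : ℂ), (v₂ : ℂ)} : Set ℂ)) :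
    (∀ x : Fin k → R,
      (∑ g ∈ Ω, whom χ (∑ i, x i * g i)) =
        (Ω.card : ℂ) - ∑ g ∈ Ω, χ (∑ i, x i * g i) ∧
      (∑ g ∈ Ω, whom χ (∑ i, x i * g i)) ∈
        ({0, (Ω.card : ℂ) - v₁, (Ω.card : ℂ) - v₂} : Set ℂ)) ∧
    (∀ x : Fin k → R,
      whomV χ (fun j => ∑ i, x i * G i j) ∈
        ({0, (r : ℂ) * ((Ω.card : ℂ) - v₁),
             (r : ℂ) * ((Ω.card : ℂ) - v₂)} : Set ℂ)) := by
  have hΩ_orbits : Ω = univ.biUnion fun j => unitOrbit fun i => G i j := by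
    ext g
    simp [hΩ, mem_unitOrbit, eq_comm]
  have hΩ_units : ∀ g ∈ Ω, ∀ u : Rˣ, (fun i => g i * u) ∈ Ω := fun g hg u =>
    hΩ_orbits ▸ mul_unit_mem_biUnion_unitOrbit G (hΩ_orbits ▸ hg) u
  have hΩ_columns : ∀ g ∈ Ω, ∃ y, G.mulVec y = g := fun g hg =>
    exists_mulVec_eq_of_mem_biUnion_unitOrbit G (hΩ_orbits ▸ hg)
  have hweight (x : Fin k → R) : ∑ g ∈ Ω, whom χ (∑ i, x i * g i) ∈
      ({0, (#Ω : ℂ) - v₁, (#Ω : ℂ) - v₂} : Set ℂ) := by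
    have hchar : ∑ g ∈ Ω, χ (∑ i, x i * g i) ∈ ({(#Ω : ℂ), (v₁ : ℂ), (v₂ : ℂ)} : Set ℂ) :=
      sum_apply_mem_insert_card_of_twoValued _ Ω hΩ_columns hval
        (χ.compAddMonoidHom (AddMonoidHom.mk' (fun g => ∑ i, x i * g i) fun g h => by
          simp [mul_add, sum_add_distrib]))
    rw [hχ.sum_whom_eq_card_sub_sum x Ω hΩ_units]
    obtain h | h | h : _ = _ ∨ _ = _ ∨ _ = _ := hchar <;> simp [h]
  refine ⟨fun x => ⟨hχ.sum_whom_eq_card_sub_sum x Ω hΩ_units, hweight x⟩, fun x => ?_⟩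
  rw [whomV, hχ.sum_whom_columns_eq G r hmod x, ← hΩ_orbits]
  obtain h | h | h : _ = _ ∨ _ = _ ∨ _ = _ := hweight x <;> simp [h]

/-- Character-sum criterion: let `Ω = g₁R^× ∪ … ∪ gₙR^×` be the union of the
unit orbits of the (nonzero) columns of `G`, contained in the column space
`D = {Gy}`, and suppose every character of `(D,+)` that is nontrivial on `D`
sums over `Ω` to `v₁` or `v₂`.  Then for every `x ∈ R^k` the sum
`Σ_{g∈Ω} w_hom(x·g) = |Ω| − Σ_{g∈Ω} χ(x·g)` takes only the values
`0`, `|Ω|−v₁`, `|Ω|−v₂`; hence (when `C` is modular of index `r`) the left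
code `C = {xG}` has at most two nonzero homogeneous weights. -/
theorem twoValued_charSum_gives_twoWeight {R : Type} [Ring R] [Fintype R]
    (χ : AddChar R ℂ) (hχ : IsGenChar χ)
    (k n : ℕ) (G : Matrix (Fin k) (Fin n) R)
    (hcolnz : ∀ j, (fun i => G i j) ≠ (0 : Fin k → R))
    (r : ℝ)
    (hmod : ∀ j, ((Finset.univ.filter (fun j' =>
          {v : Fin k → R | ∃ t : R, v = fun i => G i j' * t} =
          {v : Fin k → R | ∃ t : R, v = fun i => G i j * t})).card : ℝ) =
        r * ((Finset.image (fun u : Rˣ => fun i => G i j * (u : R))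
                (Finset.univ : Finset Rˣ)).card : ℝ))
    (Ω : Finset (Fin k → R))
    (hΩ : Ω = Finset.univ.filter
        (fun v : Fin k → R => ∃ j, ∃ u : Rˣ, v = fun i => G i j * (u : R)))
    (v₁ v₂ : ℝ)
    (hval : ∀ lam : AddChar (Fin k → R) ℂ,
      (∃ y : Fin n → R, lam (fun i => ∑ j, G i j * y j) ≠ 1) →
      (∑ g ∈ Ω, lam g) ∈ ({(v₁ : ℂ), (v₂ : ℂ)} : Set ℂ)) :
    (∀ x : Fin k → R,
      (∑ g ∈ Ω, whom χ (∑ i, x i * g i)) =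
        (Ω.card : ℂ) - ∑ g ∈ Ω, χ (∑ i, x i * g i) ∧
      (∑ g ∈ Ω, whom χ (∑ i, x i * g i)) ∈
        ({0, (Ω.card : ℂ) - v₁, (Ω.card : ℂ) - v₂} : Set ℂ)) ∧
    (∀ x : Fin k → R,
      whomV χ (fun j => ∑ i, x i * G i j) ∈
        ({0, (r : ℂ) * ((Ω.card : ℂ) - v₁),
             (r : ℂ) * ((Ω.card : ℂ) - v₂)} : Set ℂ)) :=
  twoValued_charSum_gives_twoWeight_general χ hχ k n G r hmod Ω hΩ v₁ v₂ hval
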